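/- arXiv:1403.0688 — 3 statements merged into one kernel-verified Lean document; each statement's English description precedes it below -/
import Mathlib

section
/- Let A be a cyclic group (finite or infinite). Then there exists a sequence (F_n) of nonempty finite subsets of A such that: (i) for every n, the set F_n contains the neutral element of A; (ii) (F_n) is a Følner sequence of A, i.e. for every g ∈ A one has |gF_n △ F_n| / |F_n| → 0 as n → ∞; and (iii) for every nonempty subset S of A and every g ∈ A, the denominators |F_n ∩ S| and |gF_n ∩ S| are nonzero for all sufficiently large n and both ratios |(gF_n △ F_n) ∩ S| / |F_n ∩ S| and |(gF_n △ F_n) ∩ S| / |gF_n ∩ S| tend to 0 as n → ∞. -/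
/-!
Take a generator `x` and `F n = {x ^ j | |j| ≤ n}`. These sets eventually contain every element
of `A`, and the translate of `F n` by `x ^ k` differs from `F n` in at most `4 |k|` elements,
uniformly in `n`. Hence for any `S`: if `S` is finite, `(g F_n △ F_n) ∩ S` is eventually empty;
if `S` is infinite, `|F_n ∩ S|` and `|g F_n ∩ S|` tend to infinity while the numerators stay
bounded. Nothing requires `j ↦ x ^ j` to be injective, so finite cyclic groups need no
separate treatment.
-/

open scoped Pointwise symmDiff
open Filter Topology

theorem Set.symmDiff_image_subset {α β : Type*} (f : α → β) (s t : Set α) :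
    (f '' s) ∆ (f '' t) ⊆ f '' (s ∆ t) := by
  rintro _ (⟨⟨a, ha, rfl⟩, hat⟩ | ⟨⟨a, ha, rfl⟩, has⟩)
  · exact ⟨a, Or.inl ⟨ha, fun h => hat ⟨a, h, rfl⟩⟩, rfl⟩
  · exact ⟨a, Or.inr ⟨ha, fun h => has ⟨a, h, rfl⟩⟩, rfl⟩

theorem Int.ncard_symmDiff_Icc_le (k n : ℤ) :
    (Set.Icc (k - n) (k + n) ∆ Set.Icc (-n) n).ncard ≤ 4 * k.natAbs := by
  have hsub : Set.Icc (k - n) (k + n) ∆ Set.Icc (-n) n ⊆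
      Set.Ico (-n - |k|) (-n + |k|) ∪ Set.Ioc (n - |k|) (n + |k|) := by
    intro j hj
    simp only [Set.mem_symmDiff, Set.mem_Icc, Set.mem_union, Set.mem_Ico, Set.mem_Ioc] at *
    rcases abs_cases k with ⟨h1, h2⟩ | ⟨h1, h2⟩ <;> omega
  calc _ ≤ (Set.Ico (-n - |k|) (-n + |k|) ∪ Set.Ioc (n - |k|) (n + |k|)).ncard :=
        Set.ncard_le_ncard hsub ((Set.finite_Ico _ _).union (Set.finite_Ioc _ _))
    _ ≤ (Set.Ico (-n - |k|) (-n + |k|)).ncard + (Set.Ioc (n - |k|) (n + |k|)).ncard :=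
        Set.ncard_union_le _ _
    _ = 4 * k.natAbs := by
        rw [← Finset.coe_Ico, ← Finset.coe_Ioc, Set.ncard_coe_finset, Set.ncard_coe_finset,
          Int.card_Ico, Int.card_Ioc, Int.abs_eq_natAbs]
        omega

section ExhaustingSequence

variable {α : Type*} {E D : ℕ → Set α}

theorem eventually_ncard_inter_ne_zero (hE : ∀ n, (E n).Finite)
    (hexh : ∀ a, ∀ᶠ n in atTop, a ∈ E n) {S : Set α} (hS : S.Nonempty) :
    ∀ᶠ n in atTop, (E n ∩ S).ncard ≠ 0 := by
  obtain ⟨a, ha⟩ := hS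
  filter_upwards [hexh a] with n hn
  exact ((Set.ncard_pos ((hE n).inter_of_left S)).2 ⟨a, hn, ha⟩).ne'

theorem tendsto_ncard_inter_atTop (hE : ∀ n, (E n).Finite)
    (hexh : ∀ a, ∀ᶠ n in atTop, a ∈ E n) {S : Set α} (hS : S.Infinite) :
    Tendsto (fun n => (E n ∩ S).ncard) atTop atTop := by
  refine tendsto_atTop.2 fun N => ?_
  obtain ⟨T, hTS, hT, rfl⟩ := hS.exists_subset_ncard_eq N
  filter_upwards [hT.eventually_all.2 fun a _ => hexh a] with n hn
  exact Set.ncard_le_ncard (Set.subset_inter hn hTS) ((hE n).inter_of_left S)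

theorem tendsto_ncard_inter_div_ncard_inter (hE : ∀ n, (E n).Finite)
    (hexh : ∀ a, ∀ᶠ n in atTop, a ∈ E n) (hD : ∀ n, (D n).Finite)
    (hDexh : ∀ a, ∀ᶠ n in atTop, a ∉ D n) {C : ℕ} (hC : ∀ n, (D n).ncard ≤ C)
    (S : Set α) :
    Tendsto (fun n => ((D n ∩ S).ncard : ℝ) / (E n ∩ S).ncard) atTop (𝓝 0) := by
  rcases S.finite_or_infinite with hS | hS
  · refine tendsto_const_nhds.congr' ?_
    filter_upwards [hS.eventually_all.2 fun a _ => hDexh a] with n hn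
    have hempty : D n ∩ S = ∅ := Set.eq_empty_of_forall_notMem fun a ha => hn a ha.2 ha.1
    simp [hempty]
  · have hden :=
      (tendsto_natCast_atTop_atTop (R := ℝ)).comp (tendsto_ncard_inter_atTop hE hexh hS)
    refine squeeze_zero (fun n => by positivity) (fun n => ?_)
      ((tendsto_const_nhds (x := (C : ℝ))).div_atTop hden)
    have hnum : (D n ∩ S).ncard ≤ C :=
      (Set.ncard_le_ncard Set.inter_subset_left (hD n)).trans (hC n)
    exact div_le_div_of_nonneg_right (mod_cast hnum) (Nat.cast_nonneg _)

end ExhaustingSequence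

section MulAction

variable {G α : Type*} [Group G] [MulAction G α] {F : ℕ → Set α}

theorem eventually_mem_smul_set (hexh : ∀ a, ∀ᶠ n in atTop, a ∈ F n) (g : G) (a : α) :
    ∀ᶠ n in atTop, a ∈ g • F n :=
  (hexh (g⁻¹ • a)).mono fun _ h => Set.mem_smul_set_iff_inv_smul_mem.2 h

theorem eventually_notMem_symmDiff_smul_set (hexh : ∀ a, ∀ᶠ n in atTop, a ∈ F n) (g : G)
    (a : α) : ∀ᶠ n in atTop, a ∉ (g • F n) ∆ F n := by
  filter_upwards [hexh a, eventually_mem_smul_set hexh g a] with n h h'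
  simp [Set.mem_symmDiff, h, h']

theorem tendsto_ncard_symmDiff_smul_inter_div (hF : ∀ n, (F n).Finite)
    (hexh : ∀ a, ∀ᶠ n in atTop, a ∈ F n) {g : G} {C : ℕ}
    (hC : ∀ n, ((g • F n) ∆ F n).ncard ≤ C) {E : ℕ → Set α} (hE : ∀ n, (E n).Finite)
    (hexhE : ∀ a, ∀ᶠ n in atTop, a ∈ E n) (S : Set α) :
    Tendsto (fun n => ((((g • F n) ∆ F n) ∩ S).ncard : ℝ) / (E n ∩ S).ncard) atTop
      (𝓝 0) :=
  tendsto_ncard_inter_div_ncard_inter hE hexhE (fun n => (hF n).smul_set.symmDiff (hF n))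
    (eventually_notMem_symmDiff_smul_set hexh g) hC S

end MulAction

section ZPowBall

variable {G : Type*} [Group G] [DecidableEq G]

noncomputable def zpowBall (x : G) (n : ℕ) : Finset G :=
  (Finset.Icc (-(n : ℤ)) n).image (x ^ ·)

theorem coe_zpowBall (x : G) (n : ℕ) :
    (zpowBall x n : Set G) = (x ^ ·) '' Set.Icc (-(n : ℤ)) n := by
  rw [zpowBall, Finset.coe_image, Finset.coe_Icc]

theorem one_mem_zpowBall (x : G) (n : ℕ) : (1 : G) ∈ zpowBall x n :=
  Finset.mem_image.2 ⟨0, by simp, zpow_zero x⟩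

theorem eventually_mem_zpowBall {x a : G} (ha : a ∈ Subgroup.zpowers x) :
    ∀ᶠ n in atTop, a ∈ (zpowBall x n : Set G) := by
  obtain ⟨m, rfl⟩ := Subgroup.mem_zpowers_iff.1 ha
  filter_upwards [eventually_ge_atTop m.natAbs] with n hn
  rw [coe_zpowBall]
  exact ⟨m, Set.mem_Icc.2 (abs_le.1 (by rw [Int.abs_eq_natAbs]; omega)), rfl⟩

theorem zpow_smul_coe_zpowBall (x : G) (k : ℤ) (n : ℕ) :
    x ^ k • (zpowBall x n : Set G) = (x ^ ·) '' Set.Icc (k - n) (k + n) := by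
  rw [coe_zpowBall, ← Set.image_smul, Set.image_image, sub_eq_add_neg,
    ← Set.image_const_add_Icc, Set.image_image]
  simp [zpow_add]

theorem ncard_symmDiff_zpow_smul_zpowBall_le (x : G) (k : ℤ) (n : ℕ) :
    ((x ^ k • (zpowBall x n : Set G)) ∆ zpowBall x n).ncard ≤ 4 * k.natAbs := by
  rw [zpow_smul_coe_zpowBall, coe_zpowBall]
  calc _ ≤ ((x ^ ·) '' (Set.Icc (k - n) (k + n) ∆ Set.Icc (-(n : ℤ)) n)).ncard :=
        Set.ncard_le_ncard (Set.symmDiff_image_subset _ _ _)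
          (((Set.finite_Icc _ _).symmDiff (Set.finite_Icc _ _)).image _)
    _ ≤ (Set.Icc (k - n) (k + n) ∆ Set.Icc (-(n : ℤ)) n).ncard :=
        Set.ncard_image_le ((Set.finite_Icc _ _).symmDiff (Set.finite_Icc _ _))
    _ ≤ 4 * k.natAbs := Int.ncard_symmDiff_Icc_le k n

end ZPowBall

/-- Lemma 5.1: a cyclic group admits a Følner sequence `(F n)` containing the
neutral element such that moreover, for every nonempty subset `S` and every
group element `g`, the relative ratios
`|(g F_n ∆ F_n) ∩ S| / |F_n ∩ S|` and `|(g F_n ∆ F_n) ∩ S| / |g F_n ∩ S|`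
tend to `0`. -/
theorem cyclic_group_good_folner_sequence {A : Type*} [Group A] [IsCyclic A] :
    ∃ F : ℕ → Finset A,
      (∀ n, (F n).Nonempty) ∧
      (∀ n, (1 : A) ∈ F n) ∧
      (∀ g : A,
        Filter.Tendsto
          (fun n => ((symmDiff (g • (F n : Set A)) (F n : Set A)).ncard : ℝ) / ((F n).card : ℝ))
          Filter.atTop (nhds 0)) ∧
      (∀ S : Set A, S.Nonempty → ∀ g : A,
        (∀ᶠ n in Filter.atTop, ((F n : Set A) ∩ S).ncard ≠ 0) ∧
        (∀ᶠ n in Filter.atTop, ((g • (F n : Set A)) ∩ S).ncard ≠ 0) ∧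
        Filter.Tendsto
          (fun n => (((symmDiff (g • (F n : Set A)) (F n : Set A)) ∩ S).ncard : ℝ) /
            (((F n : Set A) ∩ S).ncard : ℝ))
          Filter.atTop (nhds 0) ∧
        Filter.Tendsto
          (fun n => (((symmDiff (g • (F n : Set A)) (F n : Set A)) ∩ S).ncard : ℝ) /
            (((g • (F n : Set A)) ∩ S).ncard : ℝ))
          Filter.atTop (nhds 0)) := by
  classical
  obtain ⟨x, hx⟩ := IsCyclic.exists_generator (α := A)
  have hF (n : ℕ) : (zpowBall x n : Set A).Finite := (zpowBall x n).finite_toSet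
  have hexh (a : A) : ∀ᶠ n in atTop, a ∈ (zpowBall x n : Set A) :=
    eventually_mem_zpowBall (hx a)
  have hbound (g : A) :
      ∃ C, ∀ n, ((g • (zpowBall x n : Set A)) ∆ zpowBall x n).ncard ≤ C := by
    obtain ⟨k, rfl⟩ := Subgroup.mem_zpowers_iff.1 (hx g)
    exact ⟨_, ncard_symmDiff_zpow_smul_zpowBall_le x k⟩
  refine ⟨zpowBall x, fun n => ⟨1, one_mem_zpowBall x n⟩, one_mem_zpowBall x,
    fun g => ?_, fun S hS g => ?_⟩
  · obtain ⟨C, hC⟩ := hbound g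
    simpa using tendsto_ncard_symmDiff_smul_inter_div hF hexh hC hF hexh Set.univ
  · obtain ⟨C, hC⟩ := hbound g
    have hgF (n : ℕ) : (g • (zpowBall x n : Set A)).Finite := (hF n).smul_set
    have hexhg := eventually_mem_smul_set hexh g
    exact ⟨eventually_ncard_inter_ne_zero hF hexh hS,
      eventually_ncard_inter_ne_zero hgF hexhg hS,
      tendsto_ncard_symmDiff_smul_inter_div hF hexh hC hF hexh S,
      tendsto_ncard_symmDiff_smul_inter_div hF hexh hC hgF hexhg S⟩
end

section
/- For n ∈ ℕ let F_n denote the set of integers of absolute value at most n, i.e. F_n = {k ∈ ℤ : -n ≤ k ≤ n}. Then for every m ∈ ℤ and every nonempty subset S ⊆ ℤ: the cardinalities |F_n ∩ S| and |(m + F_n) ∩ S| are nonzero for all sufficiently large n, and both ratios |((m + F_n) △ F_n) ∩ S| / |F_n ∩ S| and |((m + F_n) △ F_n) ∩ S| / |(m + F_n) ∩ S| tend to 0 as n → ∞. -/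
/-!
The symmetric difference `(m + F_n) △ F_n` lies in two intervals of length `2|m|` at the ends
of `F_n`, so it has at most `4|m|` elements, and it eventually avoids every fixed integer.
If `S` is finite, the numerators therefore vanish for large `n`; if `S` is infinite, the
denominators tend to infinity because `F_n` and `m + F_n` eventually contain any finite subset
of `S`.
-/

open scoped Pointwise
open Filter Set

section Counting

variable {ι α : Type*} {l : Filter ι} {S : Set α} {A B : ι → Set α}

theorem tendsto_natCast_div_nhds_zero_of_le_of_tendsto_atTop {f g : ι → ℕ} {C : ℕ}
    (hf : ∀ i, f i ≤ C) (hg : Tendsto g l atTop) :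
    Tendsto (fun i => (f i : ℝ) / g i) l (nhds 0) := by
  refine squeeze_zero (fun i => by positivity) (fun i => ?_)
    ((tendsto_const_div_atTop_nhds_zero_nat (C : ℝ)).comp hg)
  exact div_le_div_of_nonneg_right (by exact_mod_cast hf i) (Nat.cast_nonneg _)

theorem Set.Finite.eventually_inter_eq_empty (hS : S.Finite)
    (hA : ∀ x ∈ S, ∀ᶠ i in l, x ∉ A i) : ∀ᶠ i in l, A i ∩ S = ∅ := by
  filter_upwards [(eventually_all_finite hS).2 hA] with i hi
  exact eq_empty_of_forall_notMem fun x hx => hi x hx.2 hx.1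

theorem Set.Infinite.tendsto_ncard_inter_atTop (hS : S.Infinite) (hB_fin : ∀ i, (B i).Finite)
    (hB : ∀ x ∈ S, ∀ᶠ i in l, x ∈ B i) :
    Tendsto (fun i => (B i ∩ S).ncard) l atTop := by
  refine tendsto_atTop.2 fun b => ?_
  obtain ⟨t, htS, ht_fin, rfl⟩ := hS.exists_subset_ncard_eq b
  filter_upwards [(eventually_all_finite ht_fin).2 fun x hx => hB x (htS hx)] with i hi
  exact ncard_le_ncard (fun x hx => ⟨hi x hx, htS hx⟩) ((hB_fin i).inter_of_left S)

theorem eventually_ncard_inter_ne_zero_s4 (hS : S.Nonempty) (hB_fin : ∀ i, (B i).Finite)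
    (hB : ∀ x ∈ S, ∀ᶠ i in l, x ∈ B i) : ∀ᶠ i in l, (B i ∩ S).ncard ≠ 0 := by
  obtain ⟨x, hx⟩ := hS
  filter_upwards [hB x hx] with i hi
  exact ((ncard_pos ((hB_fin i).inter_of_left S)).2 ⟨x, hi, hx⟩).ne'

theorem tendsto_ncard_inter_div_ncard_inter_nhds_zero {C : ℕ} (hA_fin : ∀ i, (A i).Finite)
    (hA_le : ∀ i, (A i).ncard ≤ C) (hA : ∀ x ∈ S, ∀ᶠ i in l, x ∉ A i)
    (hB_fin : ∀ i, (B i).Finite) (hB : ∀ x ∈ S, ∀ᶠ i in l, x ∈ B i) :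
    Tendsto (fun i => ((A i ∩ S).ncard : ℝ) / (B i ∩ S).ncard) l (nhds 0) := by
  rcases S.finite_or_infinite with hS | hS
  · refine tendsto_const_nhds.congr' ?_
    filter_upwards [hS.eventually_inter_eq_empty hA] with i hi
    simp [hi]
  · exact tendsto_natCast_div_nhds_zero_of_le_of_tendsto_atTop
      (fun i => (ncard_le_ncard inter_subset_left (hA_fin i)).trans (hA_le i))
      (hS.tendsto_ncard_inter_atTop hB_fin hB)

end Counting

namespace Int

theorem eventually_mem_Icc_neg (x : ℤ) : ∀ᶠ n : ℕ in atTop, x ∈ Icc (-(n : ℤ)) n := by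
  filter_upwards [eventually_ge_atTop x.natAbs] with n hn
  exact ⟨by omega, by omega⟩

theorem eventually_mem_vadd_Icc_neg (m x : ℤ) :
    ∀ᶠ n : ℕ in atTop, x ∈ m +ᵥ Icc (-(n : ℤ)) n := by
  simpa only [mem_vadd_set_iff_neg_vadd_mem] using eventually_mem_Icc_neg (-m +ᵥ x)

theorem symmDiff_vadd_Icc_neg_subset (m : ℤ) (n : ℕ) :
    symmDiff (m +ᵥ Icc (-(n : ℤ)) n) (Icc (-(n : ℤ)) n) ⊆
      Ico (-n - m.natAbs) (-n + m.natAbs) ∪ Ioc (n - m.natAbs) (n + m.natAbs) := by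
  intro x hx
  simp only [mem_symmDiff, mem_vadd_set_iff_neg_vadd_mem, vadd_eq_add, mem_Icc] at hx
  simp only [mem_union, mem_Ico, mem_Ioc]
  omega

theorem finite_symmDiff_vadd_Icc_neg (m : ℤ) (n : ℕ) :
    (symmDiff (m +ᵥ Icc (-(n : ℤ)) n) (Icc (-(n : ℤ)) n)).Finite :=
  ((finite_Ico _ _).union (finite_Ioc _ _)).subset (symmDiff_vadd_Icc_neg_subset m n)

theorem ncard_symmDiff_vadd_Icc_neg_le (m : ℤ) (n : ℕ) :
    (symmDiff (m +ᵥ Icc (-(n : ℤ)) n) (Icc (-(n : ℤ)) n)).ncard ≤ 4 * m.natAbs := by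
  refine (ncard_le_ncard (symmDiff_vadd_Icc_neg_subset m n)
    ((finite_Ico _ _).union (finite_Ioc _ _))).trans ((ncard_union_le _ _).trans ?_)
  rw [← Finset.coe_Ico, ← Finset.coe_Ioc, ncard_coe_finset, ncard_coe_finset, card_Ico,
    card_Ioc]
  omega

theorem eventually_notMem_symmDiff_vadd_Icc_neg (m x : ℤ) :
    ∀ᶠ n : ℕ in atTop, x ∉ symmDiff (m +ᵥ Icc (-(n : ℤ)) n) (Icc (-(n : ℤ)) n) := by
  filter_upwards [eventually_ge_atTop (x.natAbs + m.natAbs)] with n hn hx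
  have := symmDiff_vadd_Icc_neg_subset m n hx
  simp only [mem_union, mem_Ico, mem_Ioc] at this
  omega

end Int

/-- The integer case of the Følner lemma (Lemma 5.1), with `F n = [-n, n] ⊆ ℤ`:
for every `m : ℤ` and every nonempty `S ⊆ ℤ`, the cardinalities
`|F_n ∩ S|` and `|(m + F_n) ∩ S|` are eventually nonzero and the ratios
`|((m + F_n) ∆ F_n) ∩ S| / |F_n ∩ S|` and `|((m + F_n) ∆ F_n) ∩ S| / |(m + F_n) ∩ S|`
tend to `0`. -/
theorem int_interval_folner (m : ℤ) (S : Set ℤ) (hS : S.Nonempty) :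
    (∀ᶠ n : ℕ in Filter.atTop, (Set.Icc (-(n : ℤ)) n ∩ S).ncard ≠ 0) ∧
    (∀ᶠ n : ℕ in Filter.atTop, ((m +ᵥ Set.Icc (-(n : ℤ)) n) ∩ S).ncard ≠ 0) ∧
    Filter.Tendsto
      (fun n : ℕ =>
        (((symmDiff (m +ᵥ Set.Icc (-(n : ℤ)) n) (Set.Icc (-(n : ℤ)) n)) ∩ S).ncard : ℝ) /
          ((Set.Icc (-(n : ℤ)) n ∩ S).ncard : ℝ))
      Filter.atTop (nhds 0) ∧
    Filter.Tendsto
      (fun n : ℕ =>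
        (((symmDiff (m +ᵥ Set.Icc (-(n : ℤ)) n) (Set.Icc (-(n : ℤ)) n)) ∩ S).ncard : ℝ) /
          (((m +ᵥ Set.Icc (-(n : ℤ)) n) ∩ S).ncard : ℝ))
      Filter.atTop (nhds 0) := by
  have hF_fin (n : ℕ) : (Icc (-(n : ℤ)) n).Finite := finite_Icc _ _
  have hF (x : ℤ) (_ : x ∈ S) := Int.eventually_mem_Icc_neg x
  have hmF (x : ℤ) (_ : x ∈ S) := Int.eventually_mem_vadd_Icc_neg m x
  have hD (x : ℤ) (_ : x ∈ S) := Int.eventually_notMem_symmDiff_vadd_Icc_neg m x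
  refine ⟨eventually_ncard_inter_ne_zero_s4 hS hF_fin hF,
    eventually_ncard_inter_ne_zero_s4 hS (fun n => (hF_fin n).vadd_set) hmF, ?_, ?_⟩
  · exact tendsto_ncard_inter_div_ncard_inter_nhds_zero (Int.finite_symmDiff_vadd_Icc_neg m)
      (Int.ncard_symmDiff_vadd_Icc_neg_le m) hD hF_fin hF
  · exact tendsto_ncard_inter_div_ncard_inter_nhds_zero (Int.finite_symmDiff_vadd_Icc_neg m)
      (Int.ncard_symmDiff_vadd_Icc_neg_le m) hD (fun n => (hF_fin n).vadd_set) hmF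
end

section
/- Let G be a countable group with a measurable measure-preserving action on a standard probability space (X, μ) (a p.m.p. action). Let φ : G × X → ℂ be a function such that for each γ ∈ G the function x ↦ φ(γ, x) is measurable and |φ(γ, x)| ≤ 1 for μ-a.e. x, and suppose φ is positive definite on the translation groupoid G ⋉ X, i.e. for μ-a.e. x ∈ X, for every n ∈ ℕ, every γ₁, …, γ_n ∈ G and every λ₁, …, λ_n ∈ ℂ, the sum Σ_{i,j=1}^n conj(λ_i) · λ_j · φ(γ_i⁻¹ γ_j, γ_j⁻¹ · x) is a nonnegative real number. Define the averaged function φ̄ : G → ℂ by φ̄(γ) = ∫_X φ(γ, x) dμ(x). Then φ̄ is a positive definite function on G, i.e. for every n ∈ ℕ, every γ₁, …, γ_n ∈ G and every λ₁, …, λ_n ∈ ℂ, the sum Σ_{i,j=1}^n conj(λ_i) · λ_j · φ̄(γ_i⁻¹ γ_j) is a nonnegative real number; moreover if φ(e, x) = 1 for μ-a.e. x (e the neutral element of G), then φ̄(e) = 1. -/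
open scoped ComplexOrder
open MeasureTheory

/-! Change variables x ↦ γⱼ⁻¹ • x in each entry: since the action preserves μ, the matrix
`(φ̄(γᵢ⁻¹γⱼ))ᵢⱼ` is the μ-integral of the matrices `(φ(γᵢ⁻¹γⱼ, γⱼ⁻¹ • x))ᵢⱼ`, which are
positive semidefinite for a.e. x, and an integral of a.e. nonnegative complex numbers is
nonnegative. -/

section

variable {X : Type*} [MeasurableSpace X] {μ : Measure X}

theorem integral_comp_smul_of_measurePreserving {G E : Type*} [Group G] [MulAction G X]
    [NormedAddCommGroup E] [NormedSpace ℝ E]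
    (hpmp : ∀ γ : G, MeasurePreserving (fun x : X => γ • x) μ μ) (γ : G) (f : X → E) :
    ∫ x, f (γ • x) ∂μ = ∫ x, f x ∂μ :=
  (hpmp γ).integral_comp
    (MeasurableEquiv.mk (MulAction.toPerm γ) (hpmp γ).measurable
      (hpmp γ⁻¹).measurable).measurableEmbedding f

theorem sum_mul_integral_nonneg_of_ae_nonneg {ι : Type*} [Fintype ι]
    {K : ι → ι → X → ℂ} (hK : ∀ i j, Integrable (K i j) μ) (c : ι → ι → ℂ)
    (hpos : ∀ᵐ x ∂μ, 0 ≤ ∑ i, ∑ j, c i j * K i j x) :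
    0 ≤ ∑ i, ∑ j, c i j * ∫ x, K i j x ∂μ := by
  have hlin : ∑ i, ∑ j, c i j * ∫ x, K i j x ∂μ = ∫ x, ∑ i, ∑ j, c i j * K i j x ∂μ := by
    rw [integral_finsetSum _ fun i _ => integrable_finsetSum _ fun j _ => (hK i j).const_mul _]
    simp only [integral_finsetSum _ fun j _ => (hK _ j).const_mul _, integral_const_mul]
  exact hlin ▸ integral_nonneg_of_ae hpos

end

theorem averaged_positive_definite_general {G : Type*} [Group G]
    {X : Type*} [MeasurableSpace X]
    (μ : MeasureTheory.Measure X) [MeasureTheory.IsProbabilityMeasure μ]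
    [MulAction G X]
    (hpmp : ∀ γ : G, MeasureTheory.MeasurePreserving (fun x : X => γ • x) μ μ)
    (φ : G × X → ℂ)
    (hφmeas : ∀ γ : G, Measurable (fun x : X => φ (γ, x)))
    (hφbd : ∀ γ : G, ∀ᵐ x ∂μ, ‖φ (γ, x)‖ ≤ 1)
    (hφpd : ∀ᵐ x ∂μ, ∀ n : ℕ, ∀ γ : Fin n → G, ∀ lam : Fin n → ℂ,
      0 ≤ ∑ i, ∑ j, (starRingEnd ℂ) (lam i) * lam j * φ ((γ i)⁻¹ * γ j, (γ j)⁻¹ • x)) :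
    (∀ n : ℕ, ∀ γ : Fin n → G, ∀ lam : Fin n → ℂ,
      0 ≤ ∑ i, ∑ j, (starRingEnd ℂ) (lam i) * lam j * ∫ x, φ ((γ i)⁻¹ * γ j, x) ∂μ) ∧
    ((∀ᵐ x ∂μ, φ (1, x) = 1) → (∫ x, φ (1, x) ∂μ) = 1) := by
  have hint (γ : G) : Integrable (fun x => φ (γ, x)) μ :=
    .of_bound (hφmeas γ).aestronglyMeasurable 1 (hφbd γ)
  refine ⟨fun n γ lam => ?_, fun hφone => by simp [integral_congr_ae hφone]⟩
  have hK (i j : Fin n) : Integrable (fun x => φ ((γ i)⁻¹ * γ j, (γ j)⁻¹ • x)) μ :=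
    (hpmp (γ j)⁻¹).integrable_comp_of_integrable (hint _)
  have hchange (i j : Fin n) :
      ∫ x, φ ((γ i)⁻¹ * γ j, (γ j)⁻¹ • x) ∂μ = ∫ x, φ ((γ i)⁻¹ * γ j, x) ∂μ :=
    integral_comp_smul_of_measurePreserving hpmp _ fun x => φ ((γ i)⁻¹ * γ j, x)
  simpa only [hchange] using sum_mul_integral_nonneg_of_ae_nonneg hK
    (fun i j => (starRingEnd ℂ) (lam i) * lam j) (hφpd.mono fun x hx => hx n γ lam)

/-- Averaging a positive definite function on the translation groupoid `G ⋉ X`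
of a p.m.p. action yields a positive definite function on `G`; it is
normalized if the groupoid function is normalized. -/
theorem averaged_positive_definite {G : Type*} [Group G] [Countable G]
    {X : Type*} [MeasurableSpace X] [StandardBorelSpace X]
    (μ : MeasureTheory.Measure X) [MeasureTheory.IsProbabilityMeasure μ]
    [MulAction G X]
    (hmeas : ∀ γ : G, Measurable (fun x : X => γ • x))
    (hpmp : ∀ γ : G, MeasureTheory.MeasurePreserving (fun x : X => γ • x) μ μ)
    (φ : G × X → ℂ)
    (hφmeas : ∀ γ : G, Measurable (fun x : X => φ (γ, x)))
    (hφbd : ∀ γ : G, ∀ᵐ x ∂μ, ‖φ (γ, x)‖ ≤ 1)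
    (hφpd : ∀ᵐ x ∂μ, ∀ n : ℕ, ∀ γ : Fin n → G, ∀ lam : Fin n → ℂ,
      0 ≤ ∑ i, ∑ j, (starRingEnd ℂ) (lam i) * lam j * φ ((γ i)⁻¹ * γ j, (γ j)⁻¹ • x)) :
    (∀ n : ℕ, ∀ γ : Fin n → G, ∀ lam : Fin n → ℂ,
      0 ≤ ∑ i, ∑ j, (starRingEnd ℂ) (lam i) * lam j * ∫ x, φ ((γ i)⁻¹ * γ j, x) ∂μ) ∧
    ((∀ᵐ x ∂μ, φ (1, x) = 1) → (∫ x, φ (1, x) ∂μ) = 1) :=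
  averaged_positive_definite_general μ hpmp φ hφmeas hφbd hφpd
end
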